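/- arXiv:1304.5778 — 4 statements merged into one kernel-verified Lean document; each statement's English description precedes it below -/
import Mathlib

section
/- In the augmentation variety computation for the Hopf link: if ε is an algebra map on generators a₁₂, a₂₁ with values in ℂ (with ε(λ_i), ε(μ_i), ε(Q) ∈ ℂ*) satisfying ε(λ₁μ₁λ₂^{-1}μ₂^{-1} - 1)·ε(a₁₂) = 0, ε(1 - λ₁^{-1}μ₁^{-1}λ₂μ₂)·ε(a₂₁) = 0, ε(Q - λ₁ - μ₁ + λ₁μ₁ + λ₁μ₁μ₂^{-1} a₁₂a₂₁) = 0, ε(λ₂ - μ₁)·ε(a₂₁) = 0, and ε(Q - λ₂ - μ₂ + λ₂μ₂ + λ₂ a₁₂a₂₁) = 0, then either (i) ε(a₁₂)ε(a₂₁) = 0 and both Q - λ_i - μ_i + λ_iμ_i vanish under ε for i = 1,2, or (ii) ε(a₁₂)ε(a₂₁) ≠ 0 and ε(λ₂) = ε(μ₁), ε(λ₁) = ε(μ₂). -/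
theorem stmt10_general (Q l1 m1 l2 m2 a12 a21 : ℂ)
    (hm1 : m1 ≠ 0) (hm2 : m2 ≠ 0)
    (hb12 : (l1 * m1 * l2⁻¹ * m2⁻¹ - 1) * a12 = 0)
    (hc11 : Q - l1 - m1 + l1 * m1 + l1 * m1 * m2⁻¹ * a12 * a21 = 0)
    (hc21 : (l2 - m1) * a21 = 0)
    (hc22 : Q - l2 - m2 + l2 * m2 + l2 * a12 * a21 = 0) :
    (a12 * a21 = 0 ∧ Q - l1 - m1 + l1 * m1 = 0 ∧ Q - l2 - m2 + l2 * m2 = 0) ∨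
    (a12 * a21 ≠ 0 ∧ l2 = m1 ∧ l1 = m2) := by
  by_cases h : a12 * a21 = 0
  · exact Or.inl ⟨h, by linear_combination hc11 - l1 * m1 * m2⁻¹ * h,
      by linear_combination hc22 - l2 * h⟩
  · obtain ⟨ha12, ha21⟩ := mul_ne_zero_iff.1 h
    have hl2 : l2 = m1 := sub_eq_zero.1 ((mul_eq_zero.1 hc21).resolve_right ha21)
    have hb : l1 * m1 * l2⁻¹ * m2⁻¹ = 1 :=
      sub_eq_zero.1 ((mul_eq_zero.1 hb12).resolve_right ha12)
    rw [hl2, mul_inv_cancel_right₀ hm1, mul_inv_eq_one₀ hm2] at hb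
    exact Or.inr ⟨h, hl2, hb⟩

/-- Augmentations of the Hopf link DGA: any scalar (rank-1) solution of the
equations `ε∘∂ = 0` for the degree-one generators `b₁₂, b₂₁, c₁₁, c₂₁, c₂₂, c₁₂`
satisfies either (i) `a₁₂a₂₁ = 0` and both unknot equations
`Q - λᵢ - μᵢ + λᵢμᵢ = 0`, or (ii) `a₁₂a₂₁ ≠ 0` and `λ₂ = μ₁`, `λ₁ = μ₂`. -/
theorem stmt10 (Q l1 m1 l2 m2 a12 a21 : ℂ)
    (hQ : Q ≠ 0) (hl1 : l1 ≠ 0) (hm1 : m1 ≠ 0) (hl2 : l2 ≠ 0) (hm2 : m2 ≠ 0)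
    (hb12 : (l1 * m1 * l2⁻¹ * m2⁻¹ - 1) * a12 = 0)
    (hb21 : (1 - l1⁻¹ * m1⁻¹ * l2 * m2) * a21 = 0)
    (hc11 : Q - l1 - m1 + l1 * m1 + l1 * m1 * m2⁻¹ * a12 * a21 = 0)
    (hc21 : (l2 - m1) * a21 = 0)
    (hc22 : Q - l2 - m2 + l2 * m2 + l2 * a12 * a21 = 0)
    (hc12 : Q * a12 + l1 * m2⁻¹ * a12 * (m1 * m2 - m1 - m2 + m1 * a21 * a12) = 0) :
    (a12 * a21 = 0 ∧ Q - l1 - m1 + l1 * m1 = 0 ∧ Q - l2 - m2 + l2 * m2 = 0) ∨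
    (a12 * a21 ≠ 0 ∧ l2 = m1 ∧ l1 = m2) :=
  stmt10_general Q l1 m1 l2 m2 a12 a21 hm1 hm2 hb12 hc11 hc21 hc22
end

section
/- Define the three Laurent-polynomial expressions A₁ = -λ₁ + λ₂ - (1 - Qλ₁)μ₁ + (1 - Qλ₂)μ₂, A₂ = (1 - λ₂ - μ₂ + Qλ₂μ₂)(μ₁ - λ₂), A₃ = (1 - λ₁ - μ₁ + Qλ₁μ₁)(μ₂ - λ₁) in (ℂ*)⁴ with parameter Q. Then the common zero locus of A₁, A₂, A₃ contains both V(1²) = {1 - λ_i - μ_i + Qλ_iμ_i = 0, i=1,2} and V(2) = {μ₁ = λ₂, μ₂ = λ₁}. -/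
theorem stmt11_general (Q l1 m1 l2 m2 : ℂ)
    (h : (1 - l1 - m1 + Q * l1 * m1 = 0 ∧ 1 - l2 - m2 + Q * l2 * m2 = 0) ∨
         (m1 = l2 ∧ m2 = l1)) :
    (-l1 + l2 - (1 - Q * l1) * m1 + (1 - Q * l2) * m2 = 0) ∧
    ((1 - l2 - m2 + Q * l2 * m2) * (m1 - l2) = 0) ∧
    ((1 - l1 - m1 + Q * l1 * m1) * (m2 - l1) = 0) := by
  rcases h with ⟨h1, h2⟩ | ⟨rfl, rfl⟩
  · exact ⟨by linear_combination h1 - h2, by rw [h2, zero_mul], by rw [h1, zero_mul]⟩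
  · exact ⟨by ring, by ring, by ring⟩

/-- The common zero locus of the three classical operators `A₁, A₂, A₃` for the
Hopf link contains both components `V(1²)` (two unknot curves) and
`V(2) = {μ₁ = λ₂, μ₂ = λ₁}` of the augmentation variety. -/
theorem stmt11 (Q l1 m1 l2 m2 : ℂ)
    (hl1 : l1 ≠ 0) (hm1 : m1 ≠ 0) (hl2 : l2 ≠ 0) (hm2 : m2 ≠ 0)
    (h : (1 - l1 - m1 + Q * l1 * m1 = 0 ∧ 1 - l2 - m2 + Q * l2 * m2 = 0) ∨
         (m1 = l2 ∧ m2 = l1)) :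
    (-l1 + l2 - (1 - Q * l1) * m1 + (1 - Q * l2) * m2 = 0) ∧
    ((1 - l2 - m2 + Q * l2 * m2) * (m1 - l2) = 0) ∧
    ((1 - l1 - m1 + Q * l1 * m1) * (m2 - l1) = 0) :=
  stmt11_general Q l1 m1 l2 m2 h
end

section
/- For the right-handed trefoil, a one-dimensional (rank 1) representation of its knot contact homology assigns scalars λ, μ, a, Q ∈ ℂ (with λ, μ, Q ≠ 0) satisfying λμ⁶ - λμ⁵ + Qμ³a - Qμ²a² = 0 and Q - μ - a - Qμ²λ^{-1}μ^{-4}a² = 0; eliminating a from these two equations yields that (λ,μ,Q) lies on the zero locus of Aug(λ,μ,Q) = Q³ - Q³λ - Q²μ + Q²λμ - 2Qλμ² + 2Q²λμ² + Qλμ³ - λ²μ³ - Qλμ⁴ + λ²μ⁴. -/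
/-- Rank-1 representations of the knot contact homology of the right-handed trefoil:
if `λ, μ, Q ∈ ℂ*` and `a ∈ ℂ` satisfy the two (commutative) relations, then
`(λ,μ,Q)` lies on the zero locus of the trefoil augmentation polynomial. -/
theorem stmt12 (l m Q : ℂ) (hl : l ≠ 0) (hm : m ≠ 0) (hQ : Q ≠ 0) (a : ℂ)
    (h1 : l * m ^ 6 - l * m ^ 5 + Q * m ^ 3 * a - Q * m ^ 2 * a ^ 2 = 0)
    (h2 : Q - m - a - Q * m ^ 2 * l⁻¹ * m⁻¹ ^ 4 * a ^ 2 = 0) :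
    Q ^ 3 - Q ^ 3 * l - Q ^ 2 * m + Q ^ 2 * l * m - 2 * Q * l * m ^ 2 +
      2 * Q ^ 2 * l * m ^ 2 + Q * l * m ^ 3 - l ^ 2 * m ^ 3 - Q * l * m ^ 4 +
      l ^ 2 * m ^ 4 = 0 := by
  have e2 : (Q - m - a) * l * m ^ 4 - Q * m ^ 2 * a ^ 2 = 0 := by
    field_simp at h2
    linear_combination m ^ 2 * h2
  have key : l * m ^ 7 *
      (Q ^ 3 - Q ^ 3 * l - Q ^ 2 * m + Q ^ 2 * l * m - 2 * Q * l * m ^ 2 +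
        2 * Q ^ 2 * l * m ^ 2 + Q * l * m ^ 3 - l ^ 2 * m ^ 3 - Q * l * m ^ 4 +
        l ^ 2 * m ^ 4) = 0 := by
    linear_combination
      (m ^ 3 * (Q + l * m) ^ 2 -
        Q * m ^ 2 * (m * (Q + l * m) - l * m * (Q - m ^ 2) - (Q + l * m) * a)) * h1 +
      Q * m ^ 2 * (m * (Q + l * m) - l * m * (Q - m ^ 2) - (Q + l * m) * a) * e2
  have hlm : l * m ^ 7 ≠ 0 := mul_ne_zero hl (pow_ne_zero _ hm)
  exact (mul_eq_zero.mp key).resolve_left hlm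
end

section
/- Consider the (2,4) torus link component V(2) cut out in (ℂ*)⁵ (coordinates λ₁,λ₂,μ₁,μ₂,Q) by λ₁μ₁² = λ₂μ₂² and μ₁λ₁² + (Qμ₂ - μ₁μ₂²)λ₁ - μ₂³ = 0. For fixed generic Q, the intersection of V(2) with the hypersurface pair {Q - λ₂ - μ₂ + λ₂μ₂ = 0}, projected to the (λ₁,μ₁)-plane, contains the curve {Q - λ₁ - μ₁ + λ₁μ₁ = 0}: i.e., for every (λ₁,μ₁) ∈ (ℂ*)² with Q - λ₁ - μ₁ + λ₁μ₁ = 0 there exist λ₂,μ₂ ∈ ℂ* with Q - λ₂ - μ₂ + λ₂μ₂ = 0 and the two V(2) equations satisfied. -/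
/-!
Given `(λ₁, μ₁)` on the unknot curve, take `μ₂` to be a root of
`μ₂² + λ₁(μ₁ - 1)μ₂ - λ₁μ₁ = 0` (nonzero, as the constant term is `-λ₁μ₁`) and let
`λ₂ = λ₁μ₁² / μ₂²`, which is forced by the first `V(2)` equation. Modulo this quadratic and the
unknot relation for `(λ₁, μ₁)`, the unknot relation for `(λ₂, μ₂)` and the second `V(2)` equation
are polynomial identities.
-/

open Polynomial

theorem IsAlgClosed.exists_monic_quadratic_eq_zero {K : Type*} [Field K] [IsAlgClosed K]
    (b c : K) : ∃ x : K, x ^ 2 + b * x + c = 0 := by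
  obtain ⟨x, hx⟩ := IsAlgClosed.exists_root (C 1 * X ^ 2 + C b * X + C c)
    (by rw [degree_quadratic one_ne_zero]; decide)
  exact ⟨x, by simpa using hx⟩

section ReductionFibre

variable {K : Type*} [Field K] {Q l1 m1 m2 : K}

theorem ne_zero_of_reduction_quadratic (hl1 : l1 ≠ 0) (hm1 : m1 ≠ 0)
    (hE : m2 ^ 2 + l1 * (m1 - 1) * m2 - l1 * m1 = 0) : m2 ≠ 0 := by
  rintro rfl
  exact mul_ne_zero hl1 hm1 (by linear_combination -hE)

theorem unknot_of_reduction_quadratic (h : Q - l1 - m1 + l1 * m1 = 0)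
    (hE : m2 ^ 2 + l1 * (m1 - 1) * m2 - l1 * m1 = 0) (hm2 : m2 ≠ 0) :
    Q - l1 * m1 ^ 2 / m2 ^ 2 - m2 + l1 * m1 ^ 2 / m2 ^ 2 * m2 = 0 := by
  have cleared : -m2 ^ 3 + Q * m2 ^ 2 + l1 * m1 ^ 2 * m2 - l1 * m1 ^ 2 = 0 := by
    linear_combination (m1 - m2) * hE + m2 ^ 2 * h
  field_simp
  linear_combination cleared

theorem torusLink_eq_of_reduction_quadratic (h : Q - l1 - m1 + l1 * m1 = 0)
    (hE : m2 ^ 2 + l1 * (m1 - 1) * m2 - l1 * m1 = 0) :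
    m1 * l1 ^ 2 + (Q * m2 - m1 * m2 ^ 2) * l1 - m2 ^ 3 = 0 := by
  linear_combination (-(m2 + l1)) * hE + l1 * m2 * h

end ReductionFibre

theorem stmt13_general (Q : ℂ) (l1 m1 : ℂ)
    (hl1 : l1 ≠ 0) (hm1 : m1 ≠ 0) (h : Q - l1 - m1 + l1 * m1 = 0) :
    ∃ l2 m2 : ℂ, l2 ≠ 0 ∧ m2 ≠ 0 ∧ Q - l2 - m2 + l2 * m2 = 0 ∧
      l1 * m1 ^ 2 = l2 * m2 ^ 2 ∧
      m1 * l1 ^ 2 + (Q * m2 - m1 * m2 ^ 2) * l1 - m2 ^ 3 = 0 := by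
  obtain ⟨m2, hE⟩ := IsAlgClosed.exists_monic_quadratic_eq_zero (l1 * (m1 - 1)) (-(l1 * m1))
  rw [← sub_eq_add_neg] at hE
  have hm2 := ne_zero_of_reduction_quadratic hl1 hm1 hE
  refine ⟨l1 * m1 ^ 2 / m2 ^ 2, m2, by positivity, hm2,
    unknot_of_reduction_quadratic h hE hm2, by field_simp,
    torusLink_eq_of_reduction_quadratic h hE⟩

/-- Lagrangian reduction for the `(2,4)` torus link: for generic `Q` and any point
`(λ₁,μ₁)` of the unknot curve `Q - λ₁ - μ₁ + λ₁μ₁ = 0`, there exist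
`(λ₂,μ₂) ∈ (ℂ*)²` on the unknot curve such that the two defining equations of the
mixed component `V(2)` of the `(2,4)` torus link hold. -/
theorem stmt13 (Q : ℂ) (hQ0 : Q ≠ 0) (hQ1 : Q ≠ 1) (l1 m1 : ℂ)
    (hl1 : l1 ≠ 0) (hm1 : m1 ≠ 0) (h : Q - l1 - m1 + l1 * m1 = 0) :
    ∃ l2 m2 : ℂ, l2 ≠ 0 ∧ m2 ≠ 0 ∧ Q - l2 - m2 + l2 * m2 = 0 ∧
      l1 * m1 ^ 2 = l2 * m2 ^ 2 ∧
      m1 * l1 ^ 2 + (Q * m2 - m1 * m2 ^ 2) * l1 - m2 ^ 3 = 0 :=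
  stmt13_general Q l1 m1 hl1 hm1 h
end
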